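/- arXiv:2502.04004 — 3 statements merged into one kernel-verified Lean document; each statement's English description precedes it below -/
import Mathlib

section
/- Let X be a binomial random variable with parameters n and p, and assume n ≥ 2/p. Then E[√X] ≥ (1/4)·√(np). -/
open Polynomial

/-- Zeroth moment: the binomial weights sum to 1. -/
lemma binom_sum_one (n : ℕ) (p : ℝ) :
    ∑ k ∈ Finset.range (n + 1), (n.choose k : ℝ) * p ^ k * (1 - p) ^ (n - k) = 1 := by
  have h := congrArg (Polynomial.eval p) (bernsteinPolynomial.sum ℝ n)
  simpa [bernsteinPolynomial, Polynomial.eval_finset_sum] using h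

/-- First moment. -/
lemma binom_sum_k (n : ℕ) (p : ℝ) :
    ∑ k ∈ Finset.range (n + 1), (k : ℝ) * ((n.choose k : ℝ) * p ^ k * (1 - p) ^ (n - k))
      = n * p := by
  have h := congrArg (Polynomial.eval p) (bernsteinPolynomial.sum_smul ℝ n)
  simpa [bernsteinPolynomial, Polynomial.eval_finset_sum, mul_comm, mul_assoc, mul_left_comm]
    using h

/-- Second factorial moment. -/
lemma binom_sum_kk (n : ℕ) (p : ℝ) :
    ∑ k ∈ Finset.range (n + 1),
        ((k : ℝ) * (k - 1)) * ((n.choose k : ℝ) * p ^ k * (1 - p) ^ (n - k))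
      = n * (n - 1) * p ^ 2 := by
  have h := congrArg (Polynomial.eval p) (bernsteinPolynomial.sum_mul_smul ℝ n)
  rw [Polynomial.eval_finset_sum] at h
  have h2 : ∑ k ∈ Finset.range (n + 1),
      ((k * (k - 1) : ℕ) : ℝ) * ((n.choose k : ℝ) * p ^ k * (1 - p) ^ (n - k))
      = ((n * (n - 1) : ℕ) : ℝ) * p ^ 2 := by
    simpa [bernsteinPolynomial, mul_comm, mul_assoc, mul_left_comm] using h
  have hr : ((n * (n - 1) : ℕ) : ℝ) = (n : ℝ) * ((n : ℝ) - 1) := by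
    rcases n with _ | m
    · simp
    · push_cast [Nat.succ_sub_one]; ring
  rw [hr] at h2
  rw [← h2]
  apply Finset.sum_congr rfl
  intro k _
  congr 1
  rcases k with _ | k
  · simp
  · push_cast [Nat.succ_sub_one]
    ring

/-- Pointwise bound: for `x ≥ 0`, `m > 0`, `(3mx - x²)/(2m√m) ≤ √x`. -/
lemma sqrt_lower (x m : ℝ) (hx : 0 ≤ x) (hm : 0 < m) :
    (3 * m * x - x ^ 2) / (2 * m * Real.sqrt m) ≤ Real.sqrt x := by
  have hsm : 0 < Real.sqrt m := Real.sqrt_pos.mpr hm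
  have hsx : 0 ≤ Real.sqrt x := Real.sqrt_nonneg x
  rw [div_le_iff₀ (by positivity)]
  have hxeq : Real.sqrt x ^ 2 = x := Real.sq_sqrt hx
  have hmeq : Real.sqrt m ^ 2 = m := Real.sq_sqrt hm.le
  set s := Real.sqrt x
  set t := Real.sqrt m
  have key : 0 ≤ s * (s - t) ^ 2 * (s + 2 * t) :=
    mul_nonneg (mul_nonneg hsx (sq_nonneg _)) (by linarith)
  nlinarith [key, hxeq, hmeq]

/-- If `X ~ Bin(n, p)` with `0 < p ≤ 1` and `n ≥ 2/p`, then `E[√X] ≥ (1/4)·√(np)`.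
The expectation is written explicitly via the binomial distribution. -/
theorem binomial_expected_sqrt_lower_bound
    (n : ℕ) (p : ℝ) (hp0 : 0 < p) (hp1 : p ≤ 1)
    (hn : (n : ℝ) ≥ 2 / p) :
    ∑ k ∈ Finset.range (n + 1),
      (n.choose k : ℝ) * p ^ k * (1 - p) ^ (n - k) * Real.sqrt k
      ≥ (1 / 4) * Real.sqrt (n * p) := by
  set μ : ℝ := (n : ℝ) * p with hμdef
  have hμ2 : 2 ≤ μ := by
    have := (div_le_iff₀ hp0).mp hn
    linarith
  have hμ0 : 0 < μ := by linarith
  have hq : 0 ≤ 1 - p := by linarith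
  have hsμ : 0 < Real.sqrt μ := Real.sqrt_pos.mpr hμ0
  have hsμeq : Real.sqrt μ ^ 2 = μ := Real.sq_sqrt hμ0.le
  -- lower bound each term
  have key : ∀ k ∈ Finset.range (n + 1),
      (n.choose k : ℝ) * p ^ k * (1 - p) ^ (n - k)
        * ((3 * μ * k - (k : ℝ) ^ 2) / (2 * μ * Real.sqrt μ))
      ≤ (n.choose k : ℝ) * p ^ k * (1 - p) ^ (n - k) * Real.sqrt k := by
    intro k _
    have hw : (0 : ℝ) ≤ (n.choose k : ℝ) * p ^ k * (1 - p) ^ (n - k) := by positivity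
    exact mul_le_mul_of_nonneg_left
      (sqrt_lower k μ (Nat.cast_nonneg k) hμ0) hw
  have hsum := Finset.sum_le_sum key
  -- compute the left sum of hsum
  have hS0 := binom_sum_one n p
  have hS1 := binom_sum_k n p
  have hS2 := binom_sum_kk n p
  have hLHS : ∑ k ∈ Finset.range (n + 1),
      (n.choose k : ℝ) * p ^ k * (1 - p) ^ (n - k)
        * ((3 * μ * k - (k : ℝ) ^ 2) / (2 * μ * Real.sqrt μ))
      = (3 * μ * μ - (n * (n - 1) * p ^ 2 + μ)) / (2 * μ * Real.sqrt μ) := by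
    rw [eq_div_iff (by positivity)]
    rw [Finset.sum_mul]
    have : ∀ k ∈ Finset.range (n + 1),
        (n.choose k : ℝ) * p ^ k * (1 - p) ^ (n - k)
          * ((3 * μ * k - (k : ℝ) ^ 2) / (2 * μ * Real.sqrt μ)) * (2 * μ * Real.sqrt μ)
        = 3 * μ * ((k : ℝ) * ((n.choose k : ℝ) * p ^ k * (1 - p) ^ (n - k)))
          - (((k : ℝ) * (k - 1)) * ((n.choose k : ℝ) * p ^ k * (1 - p) ^ (n - k))
             + (k : ℝ) * ((n.choose k : ℝ) * p ^ k * (1 - p) ^ (n - k))) := by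
      intro k _
      field_simp
      ring
    rw [Finset.sum_congr rfl this, Finset.sum_sub_distrib, ← Finset.mul_sum,
      Finset.sum_add_distrib, hS1, hS2]
  rw [hLHS] at hsum
  refine le_trans ?_ hsum
  rw [le_div_iff₀ (by positivity)]
  have hnn : (n : ℝ) * ((n : ℝ) - 1) * p ^ 2 = μ ^ 2 - μ * p := by rw [hμdef]; ring
  rw [hnn]
  nlinarith [hsμeq, hsμ.le, mul_nonneg (sub_nonneg.mpr hμ2) hμ0.le, mul_pos hμ0 hp0]
end

section
/- Entropy-regularized OMD (exponential weights) regret bound: with x_1 uniform over [d] and x_{k+1}(a) ∝ x_k(a)e^{−η g_k(a)}, if η g_k(a) ≥ −1 for all k,a, then for any x* ∈ Δ_d, Σ_{k=1}^K ⟨g_k, x_k − x*⟩ ≤ (log d)/η + η Σ_{k=1}^K Σ_{a=1}^d x_k(a) g_k(a)². -/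
lemma exp_neg_le_quad {z : ℝ} (hz : -1 ≤ z) : Real.exp (-z) ≤ 1 - z + z ^ 2 := by
  rcases le_or_gt z 1 with h1 | h1
  · have habs : |(-z)| ≤ 1 := by rw [abs_neg, abs_le]; exact ⟨hz, h1⟩
    have h := Real.exp_bound habs (n := 2) (by norm_num)
    have h2 := (abs_sub_le_iff.1 h).1
    have hsum : ∑ m ∈ Finset.range 2, (-z) ^ m / m.factorial = 1 - z := by
      norm_num [Finset.sum_range_succ]; try ring
    rw [hsum] at h2
    have h3 : |(-z)| ^ 2 = z ^ 2 := by rw [abs_neg, sq_abs]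
    rw [h3] at h2
    norm_num at h2
    nlinarith [sq_nonneg z]
  · have h0 : Real.exp (-z) ≤ 1 := by
      rw [Real.exp_le_one_iff]; linarith
    nlinarith [sq_nonneg z]

/-- Entropy-regularized OMD (exponential weights) regret bound: with `x_1`
uniform over `[d]`, multiplicative updates `x_{k+1}(a) ∝ x_k(a)e^{−η g_k(a)}`,
and `η g_k(a) ≥ −1`, for any `x* ∈ Δ_d`,
`Σ_{k<K} ⟨g_k, x_k − x*⟩ ≤ (log d)/η + η Σ_{k<K} Σ_a x_k(a) g_k(a)²`. -/
theorem omd_regret_bound (d K : ℕ) (hd : 1 ≤ d)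
    (η : ℝ) (hη : 0 < η)
    (g : ℕ → Fin d → ℝ) (hg : ∀ k a, -1 ≤ η * g k a)
    (x : ℕ → Fin d → ℝ)
    (hx0 : ∀ a, x 0 a = 1 / d)
    (hxrec : ∀ k a, x (k + 1) a
      = x k a * Real.exp (-η * g k a) / ∑ a', x k a' * Real.exp (-η * g k a'))
    (xstar : Fin d → ℝ) (hxs0 : ∀ a, 0 ≤ xstar a) (hxs1 : ∑ a, xstar a = 1) :
    ∑ k ∈ Finset.range K, ∑ a, g k a * (x k a - xstar a)
      ≤ Real.log d / η
        + η * ∑ k ∈ Finset.range K, ∑ a, x k a * (g k a) ^ 2 := by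
  have hd0 : (0:ℝ) < d := by exact_mod_cast hd
  haveI : Nonempty (Fin d) := ⟨⟨0, hd⟩⟩
  -- positivity and normalization of iterates
  have key : ∀ k, (∀ a, 0 < x k a) ∧ (∑ a, x k a = 1) := by
    intro k
    induction k with
    | zero =>
      refine ⟨fun a => by rw [hx0]; positivity, ?_⟩
      simp only [hx0, Finset.sum_const, Finset.card_univ, Fintype.card_fin, nsmul_eq_mul]
      field_simp
    | succ k ih =>
      obtain ⟨hpos, hsum⟩ := ih
      have hZ : 0 < ∑ a', x k a' * Real.exp (-η * g k a') :=
        Finset.sum_pos (fun a _ => mul_pos (hpos a) (Real.exp_pos _)) Finset.univ_nonempty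
      refine ⟨fun a => by
        rw [hxrec]; exact div_pos (mul_pos (hpos a) (Real.exp_pos _)) hZ, ?_⟩
      simp only [hxrec]
      rw [← Finset.sum_div, div_self (ne_of_gt hZ)]
  have hxpos : ∀ k a, 0 < x k a := fun k => (key k).1
  have hxsum : ∀ k, ∑ a, x k a = 1 := fun k => (key k).2
  set KL : ℕ → ℝ := fun k => ∑ a, xstar a * Real.log (xstar a / x k a) with hKLdef
  -- per-step inequality
  have step : ∀ k, η * (∑ a, g k a * (x k a - xstar a))
      ≤ η ^ 2 * (∑ a, x k a * (g k a) ^ 2) + (KL k - KL (k + 1)) := by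
    intro k
    set Z : ℝ := ∑ a', x k a' * Real.exp (-η * g k a') with hZdef
    have hZ : 0 < Z :=
      Finset.sum_pos (fun a _ => mul_pos (hxpos k a) (Real.exp_pos _)) Finset.univ_nonempty
    -- bound on log Z
    have hA : Real.log Z ≤ -η * (∑ a, g k a * x k a) + η ^ 2 * (∑ a, x k a * (g k a) ^ 2) := by
      have hZle : Z ≤ ∑ a, x k a * (1 - η * g k a + (η * g k a) ^ 2) := by
        apply Finset.sum_le_sum
        intro a _
        have := exp_neg_le_quad (hg k a)
        have h2 : Real.exp (-η * g k a) ≤ 1 - η * g k a + (η * g k a) ^ 2 := by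
          rw [neg_mul]; exact this
        exact mul_le_mul_of_nonneg_left h2 (le_of_lt (hxpos k a))
      have hexp : ∑ a, x k a * (1 - η * g k a + (η * g k a) ^ 2)
          = (∑ a, x k a) - η * (∑ a, g k a * x k a) + η ^ 2 * (∑ a, x k a * (g k a) ^ 2) := by
        rw [Finset.mul_sum, Finset.mul_sum, ← Finset.sum_sub_distrib, ← Finset.sum_add_distrib]
        apply Finset.sum_congr rfl
        intro a _; ring
      have hlog : Real.log Z ≤ Z - 1 := Real.log_le_sub_one_of_pos hZ
      rw [hexp, hxsum k] at hZle
      linarith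
    -- KL difference identity
    have hB : KL k - KL (k + 1) = -η * (∑ a, g k a * xstar a) - Real.log Z := by
      have hterm : ∀ a, xstar a * Real.log (xstar a / x k a)
          - xstar a * Real.log (xstar a / x (k + 1) a)
          = xstar a * (-η * g k a - Real.log Z) := by
        intro a
        rcases eq_or_lt_of_le (hxs0 a) with h0 | h0
        · rw [← h0]; ring
        · have hxk := hxpos k a
          have hxk1 := hxpos (k + 1) a
          have hlogk1 : Real.log (x (k + 1) a)
              = Real.log (x k a) + (-η * g k a) - Real.log Z := by
            rw [hxrec k a, ← hZdef, Real.log_div (by positivity) (ne_of_gt hZ),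
              Real.log_mul (ne_of_gt hxk) (Real.exp_ne_zero _), Real.log_exp]
          rw [Real.log_div (ne_of_gt h0) (ne_of_gt hxk),
            Real.log_div (ne_of_gt h0) (ne_of_gt hxk1), hlogk1]
          ring
      have : KL k - KL (k + 1) = ∑ a, xstar a * (-η * g k a - Real.log Z) := by
        rw [hKLdef]
        simp only
        rw [← Finset.sum_sub_distrib]
        exact Finset.sum_congr rfl fun a _ => hterm a
      rw [this]
      have hsplit : ∑ a, xstar a * (-η * g k a - Real.log Z)
          = -η * (∑ a, g k a * xstar a) - Real.log Z * (∑ a, xstar a) := by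
        rw [Finset.mul_sum, Finset.mul_sum, ← Finset.sum_sub_distrib]
        apply Finset.sum_congr rfl
        intro a _; ring
      rw [hsplit, hxs1]; ring
    have hsub : ∑ a, g k a * (x k a - xstar a)
        = (∑ a, g k a * x k a) - (∑ a, g k a * xstar a) := by
      rw [← Finset.sum_sub_distrib]
      apply Finset.sum_congr rfl
      intro a _; ring
    rw [hsub]
    nlinarith [hA, hB]
  -- sum over k and telescope
  have htel : ∑ k ∈ Finset.range K, (KL k - KL (k + 1)) = KL 0 - KL K :=
    Finset.sum_range_sub' KL K
  have hsumstep : η * (∑ k ∈ Finset.range K, ∑ a, g k a * (x k a - xstar a))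
      ≤ η ^ 2 * (∑ k ∈ Finset.range K, ∑ a, x k a * (g k a) ^ 2) + (KL 0 - KL K) := by
    rw [Finset.mul_sum, Finset.mul_sum, ← htel, ← Finset.sum_add_distrib]
    exact Finset.sum_le_sum fun k _ => step k
  -- KL 0 ≤ log d
  have hxsle1 : ∀ a, xstar a ≤ 1 := by
    intro a
    calc xstar a ≤ ∑ a', xstar a' :=
          Finset.single_le_sum (fun a' _ => hxs0 a') (Finset.mem_univ a)
      _ = 1 := hxs1
  have hKL0 : KL 0 ≤ Real.log d := by
    have : ∀ a, xstar a * Real.log (xstar a / x 0 a) ≤ xstar a * Real.log d := by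
      intro a
      rcases eq_or_lt_of_le (hxs0 a) with h0 | h0
      · rw [← h0]; ring_nf; exact le_refl _
      · apply mul_le_mul_of_nonneg_left _ (le_of_lt h0)
        rw [hx0 a]
        have harg : xstar a / (1 / (d:ℝ)) = xstar a * d := by field_simp
        rw [harg]
        apply Real.log_le_log (by positivity)
        nlinarith [hxsle1 a]
    calc KL 0 ≤ ∑ a, xstar a * Real.log d := Finset.sum_le_sum fun a _ => this a
      _ = Real.log d := by rw [← Finset.sum_mul, hxs1, one_mul]
  -- KL K ≥ 0
  have hKLK : 0 ≤ KL K := by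
    have hterm : ∀ a, xstar a - x K a ≤ xstar a * Real.log (xstar a / x K a) := by
      intro a
      rcases eq_or_lt_of_le (hxs0 a) with h0 | h0
      · rw [← h0]; simp; linarith [hxpos K a]
      · have h1 : Real.log (x K a / xstar a) ≤ x K a / xstar a - 1 :=
          Real.log_le_sub_one_of_pos (div_pos (hxpos K a) h0)
        have h2 : Real.log (x K a / xstar a) = - Real.log (xstar a / x K a) := by
          rw [← Real.log_inv]
          congr 1
          field_simp
        rw [h2] at h1
        have h3 : 1 - x K a / xstar a ≤ Real.log (xstar a / x K a) := by linarith
        have := mul_le_mul_of_nonneg_left h3 (le_of_lt h0)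
        have h4 : xstar a * (1 - x K a / xstar a) = xstar a - x K a := by
          field_simp
        linarith [h4 ▸ this]
    calc (0:ℝ) = ∑ a, (xstar a - x K a) := by
          rw [Finset.sum_sub_distrib, hxs1, hxsum K]; ring
      _ ≤ KL K := Finset.sum_le_sum fun a _ => hterm a
  -- conclude
  set S := ∑ k ∈ Finset.range K, ∑ a, x k a * (g k a) ^ 2 with hS
  set L := ∑ k ∈ Finset.range K, ∑ a, g k a * (x k a - xstar a) with hL
  have hmain : η * L ≤ Real.log d + η ^ 2 * S := by linarith
  rw [show Real.log d / η + η * S = (Real.log d + η ^ 2 * S) / η by field_simp]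
  rw [le_div_iff₀ hη]
  nlinarith [hmain]
end

section
/- A special form of Freedman's inequality: let (X_t) be a real-valued martingale difference sequence adapted to filtration (F_t) with |X_t| ≤ R a.s. Then for any α ∈ (0, 1/R] and T, with probability at least 1−δ, Σ_{t=1}^T X_t ≤ α Σ_{t=1}^T E[X_t² | F_t] + log(1/δ)/α. -/
/-! Since `|α X_t| ≤ 1`, the bound `eˣ ≤ 1 + x + x²` and `E[X_t | F_t] = 0` give
`E[exp (α X_t) | F_t] ≤ 1 + α² E[X_t² | F_t] ≤ exp (α² E[X_t² | F_t])`. Hence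
`exp (α Σ_{t<n} X_t - α² Σ_{t<n} E[X_t² | F_t])` is a supermartingale started at `1`, its
expectation is at most `1`, and the Chernoff bound at level `log (1/δ)` gives the claim. -/

open MeasureTheory Real Finset ProbabilityTheory

section

variable {Ω : Type*} {m m0 : MeasurableSpace Ω} {μ : Measure Ω}

theorem integrable_exp_of_ae_le [IsFiniteMeasure μ] {f : Ω → ℝ} {C : ℝ}
    (hf : AEMeasurable f μ) (hfC : ∀ᵐ ω ∂μ, f ω ≤ C) : Integrable (fun ω => exp (f ω)) μ := by
  simpa using integrable_exp_mul_of_le 1 C zero_le_one hf hfC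

theorem Real.exp_le_one_add_add_sq {x : ℝ} (hx : |x| ≤ 1) : exp x ≤ 1 + x + x ^ 2 := by
  linarith [(abs_le.mp (abs_exp_sub_one_sub_id_le hx)).2]

theorem condExp_exp_mul_ae_le_exp_condExp_sq [IsFiniteMeasure μ] (hm : m ≤ m0)
    {X : Ω → ℝ} {α R : ℝ}
    (hX : AEStronglyMeasurable X μ) (hXR : ∀ᵐ ω ∂μ, |X ω| ≤ R) (hαR : |α| * R ≤ 1)
    (hmean : μ[X | m] =ᵐ[μ] 0) :
    μ[fun ω => exp (α * X ω) | m] ≤ᵐ[μ] fun ω => exp (α ^ 2 * μ[fun ω => X ω ^ 2 | m] ω) := by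
  have hαX : ∀ᵐ ω ∂μ, |α * X ω| ≤ 1 := by
    filter_upwards [hXR] with ω h
    rw [abs_mul]
    exact (mul_le_mul_of_nonneg_left h (abs_nonneg α)).trans hαR
  have hX_int : Integrable X μ := .of_bound hX R hXR
  have hX2_int : Integrable (fun ω => X ω ^ 2) μ := by
    refine .of_bound (hX.pow 2) (R ^ 2) ?_
    filter_upwards [hXR] with ω h
    rw [Real.norm_eq_abs, abs_pow]
    exact pow_le_pow_left₀ (abs_nonneg _) h 2
  have hexp_int : Integrable (fun ω => exp (α * X ω)) μ := by
    refine integrable_exp_of_ae_le (hX.aemeasurable.const_mul α) (C := 1) ?_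
    filter_upwards [hαX] with ω h
    exact (abs_le.mp h).2
  have hquad_int : Integrable (fun ω => 1 + α * X ω + α ^ 2 * X ω ^ 2) μ :=
    ((integrable_const 1).add (hX_int.const_mul α)).add (hX2_int.const_mul (α ^ 2))
  have hquad : (fun ω => exp (α * X ω)) ≤ᵐ[μ] fun ω => 1 + α * X ω + α ^ 2 * X ω ^ 2 := by
    filter_upwards [hαX] with ω h
    linarith [exp_le_one_add_add_sq h, mul_pow α (X ω) 2]
  have hquad_condExp : μ[fun ω => 1 + α * X ω + α ^ 2 * X ω ^ 2 | m]
      =ᵐ[μ] fun ω => 1 + α ^ 2 * μ[fun ω => X ω ^ 2 | m] ω := by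
    change μ[(fun _ => (1 : ℝ)) + α • X + (α ^ 2) • (fun ω => X ω ^ 2) | m] =ᵐ[μ] _
    filter_upwards
      [condExp_add ((integrable_const 1).add (hX_int.smul α)) (hX2_int.smul (α ^ 2)) m,
      condExp_add (integrable_const 1) (hX_int.smul α) m, condExp_smul α X m,
      condExp_smul (α ^ 2) (fun ω => X ω ^ 2) m, hmean] with ω h₁ h₂ h₃ h₄ h₀
    simp only [Pi.add_apply, Pi.smul_apply, smul_eq_mul] at h₁ h₂ h₃ h₄ ⊢
    rw [h₁, h₂, h₃, h₄, condExp_const hm, h₀]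
    simp
  filter_upwards [condExp_mono hexp_int hquad_int hquad, hquad_condExp] with ω h₁ h₂
  linarith [add_one_le_exp (α ^ 2 * μ[fun ω => X ω ^ 2 | m] ω)]

theorem integrable_exp_sum_sub [IsFiniteMeasure μ] {Y W : ℕ → Ω → ℝ} {C : ℝ}
    (hY : ∀ t, AEMeasurable (Y t) μ) (hW : ∀ t, AEMeasurable (W t) μ)
    (hYC : ∀ t, ∀ᵐ ω ∂μ, Y t ω ≤ C) (hW0 : ∀ t, 0 ≤ᵐ[μ] W t) (n : ℕ) :
    Integrable (fun ω => exp (∑ t ∈ range n, (Y t ω - W t ω))) μ := by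
  refine integrable_exp_of_ae_le (C := n * C)
    (Finset.aemeasurable_fun_sum _ fun t _ => (hY t).sub (hW t)) ?_
  filter_upwards [ae_all_iff.mpr hYC, ae_all_iff.mpr hW0] with ω hYω hWω
  calc ∑ t ∈ range n, (Y t ω - W t ω) ≤ ∑ t ∈ range n, C :=
        sum_le_sum fun t _ => by linarith [hYω t, show 0 ≤ W t ω from hWω t]
    _ = n * C := by simp

theorem integral_exp_sum_sub_le_one [IsProbabilityMeasure μ] {ℱ : Filtration ℕ m0}
    {Y W : ℕ → Ω → ℝ} {C : ℝ}
    (hY : ∀ t, StronglyMeasurable[ℱ (t + 1)] (Y t)) (hW : ∀ t, StronglyMeasurable[ℱ t] (W t))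
    (hYC : ∀ t, ∀ᵐ ω ∂μ, Y t ω ≤ C) (hW0 : ∀ t, 0 ≤ᵐ[μ] W t)
    (hmgf : ∀ t, μ[fun ω => exp (Y t ω) | ℱ t] ≤ᵐ[μ] fun ω => exp (W t ω)) (n : ℕ) :
    ∫ ω, exp (∑ t ∈ range n, (Y t ω - W t ω)) ∂μ ≤ 1 := by
  have hA_int := integrable_exp_sum_sub (μ := μ) (fun t => ((hY t).mono (ℱ.le _)).aemeasurable)
    (fun t => ((hW t).mono (ℱ.le _)).aemeasurable) hYC hW0
  induction n with
  | zero => simp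
  | succ n ih =>
    set G : Ω → ℝ := fun ω => exp (∑ t ∈ range n, (Y t ω - W t ω) - W n ω)
    have hG : StronglyMeasurable[ℱ n] G := by
      refine continuous_exp.comp_stronglyMeasurable (.sub ?_ (hW n))
      exact Finset.stronglyMeasurable_fun_sum _ fun t ht =>
        ((hY t).mono (ℱ.mono (mem_range.mp ht))).sub ((hW t).mono (ℱ.mono (mem_range.mp ht).le))
    have hA_succ : (fun ω => exp (∑ t ∈ range (n + 1), (Y t ω - W t ω)))
        = G * fun ω => exp (Y n ω) := by
      ext ω
      simp only [G, Pi.mul_apply, ← exp_add, sum_range_succ]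
      ring_nf
    have hA : (fun ω => exp (∑ t ∈ range n, (Y t ω - W t ω)))
        = G * fun ω => exp (W n ω) := by
      ext ω
      simp only [G, Pi.mul_apply, ← exp_add]
      ring_nf
    have hexpY : Integrable (fun ω => exp (Y n ω)) μ :=
      integrable_exp_of_ae_le ((hY n).mono (ℱ.le _)).aemeasurable (hYC n)
    have hpull := condExp_mul_of_stronglyMeasurable_left hG (hA_succ ▸ hA_int (n + 1)) hexpY
    calc ∫ ω, exp (∑ t ∈ range (n + 1), (Y t ω - W t ω)) ∂μ
        = ∫ ω, (μ[G * fun ω => exp (Y n ω) | ℱ n]) ω ∂μ := by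
          rw [integral_condExp (ℱ.le n), hA_succ]
      _ = ∫ ω, (G * μ[fun ω => exp (Y n ω) | ℱ n]) ω ∂μ := integral_congr_ae hpull
      _ ≤ ∫ ω, (G * fun ω => exp (W n ω)) ω ∂μ := by
          refine integral_mono_ae (integrable_condExp.congr hpull) (hA ▸ hA_int n) ?_
          filter_upwards [hmgf n] with ω h
          exact mul_le_mul_of_nonneg_left h (exp_pos _).le
      _ ≤ 1 := hA ▸ ih

theorem ofReal_one_sub_le_measure_le_log_one_div [IsProbabilityMeasure μ] {Z : Ω → ℝ}
    (hint : Integrable (fun ω => exp (Z ω)) μ) (h : ∫ ω, exp (Z ω) ∂μ ≤ 1) {δ : ℝ} (hδ : 0 < δ) :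
    ENNReal.ofReal (1 - δ) ≤ μ {ω | Z ω ≤ log (1 / δ)} := by
  set s := {ω | Z ω ≤ log (1 / δ)}
  have hchernoff := measure_ge_le_exp_mul_mgf (μ := μ) (X := Z) (log (1 / δ)) zero_le_one
    (by simpa using hint)
  have htail : μ sᶜ ≤ ENNReal.ofReal δ := by
    calc μ sᶜ ≤ μ {ω | log (1 / δ) ≤ Z ω} :=
          measure_mono fun ω (hω : ¬ Z ω ≤ _) => (not_le.mp hω).le
      _ = ENNReal.ofReal (μ.real {ω | log (1 / δ) ≤ Z ω}) := (ofReal_measureReal).symm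
      _ ≤ ENNReal.ofReal δ := by
        refine ENNReal.ofReal_le_ofReal (hchernoff.trans ?_)
        rw [neg_one_mul, exp_neg, exp_log (by positivity), one_div, inv_inv, mgf]
        simpa using mul_le_of_le_one_right hδ.le h
  calc ENNReal.ofReal (1 - δ) = 1 - ENNReal.ofReal δ := by
        rw [ENNReal.ofReal_sub _ hδ.le, ENNReal.ofReal_one]
    _ ≤ 1 - μ sᶜ := tsub_le_tsub_left htail 1
    _ ≤ μ s := by
        rw [tsub_le_iff_right, ← measure_univ (μ := μ)]
        exact measure_univ_le_add_compl s

end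

theorem freedman_special_form_general {Ω : Type*} {m0 : MeasurableSpace Ω}
    (P : Measure Ω) [IsProbabilityMeasure P]
    (ℱ : Filtration ℕ m0) (X : ℕ → Ω → ℝ)
    (R : ℝ) (hR : 0 < R)
    (hadapted : ∀ t, StronglyMeasurable[ℱ (t + 1)] (X t))
    (hmds : ∀ t, P[X t | ℱ t] =ᵐ[P] 0)
    (hbdd : ∀ t, ∀ᵐ ω ∂P, |X t ω| ≤ R)
    (α : ℝ) (hα0 : 0 < α) (hα1 : α ≤ 1 / R)
    (T : ℕ) (δ : ℝ) (hδ0 : 0 < δ) :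
    P {ω | ∑ t ∈ Finset.range T, X t ω
        ≤ α * ∑ t ∈ Finset.range T, (P[fun ω' => (X t ω') ^ 2 | ℱ t]) ω
          + Real.log (1 / δ) / α}
      ≥ ENNReal.ofReal (1 - δ) := by
  set V : ℕ → Ω → ℝ := fun t => P[fun ω' => (X t ω') ^ 2 | ℱ t]
  have hαR : |α| * R ≤ 1 := by rw [abs_of_pos hα0, ← le_div_iff₀ hR]; exact hα1
  have hαX : ∀ t, ∀ᵐ ω ∂P, α * X t ω ≤ 1 := fun t => by
    filter_upwards [hbdd t] with ω h
    exact (le_abs_self _).trans ((abs_mul α _).trans_le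
      ((mul_le_mul_of_nonneg_left h (abs_nonneg α)).trans hαR))
  have hV0 : ∀ t, 0 ≤ᵐ[P] fun ω => α ^ 2 * V t ω := fun t => by
    filter_upwards [condExp_nonneg (m := ℱ t) (ae_of_all P fun ω => sq_nonneg (X t ω))]
      with ω h
    exact mul_nonneg (sq_nonneg α) h
  have hX : ∀ t, StronglyMeasurable (X t) := fun t => (hadapted t).mono (ℱ.le _)
  have hsupermart := integral_exp_sum_sub_le_one (ℱ := ℱ) (fun t => (hadapted t).const_mul α)
    (fun t => stronglyMeasurable_condExp.const_mul _) hαX hV0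
    (fun t => condExp_exp_mul_ae_le_exp_condExp_sq (ℱ.le t) (hX t).aestronglyMeasurable (hbdd t)
      hαR (hmds t)) T
  have hint := integrable_exp_sum_sub (fun t => ((hX t).const_mul α).aemeasurable)
    (fun t => (stronglyMeasurable_condExp.mono (ℱ.le t)).aemeasurable.const_mul _) hαX hV0 T
  refine (ofReal_one_sub_le_measure_le_log_one_div hint hsupermart hδ0).trans
    (measure_mono fun ω hω => ?_)
  simp only [Set.mem_ofPred_eq, sum_sub_distrib, ← mul_sum] at hω ⊢
  rw [← sub_le_iff_le_add', le_div_iff₀ hα0]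
  linarith

/-- A special form of Freedman's inequality: if `(X_t)` is a martingale
difference sequence with `|X_t| ≤ R` a.s., then for any `α ∈ (0, 1/R]` and `T`,
with probability at least `1 − δ`,
`Σ_{t<T} X_t ≤ α Σ_{t<T} E[X_t² | F_t] + log(1/δ)/α`. -/
theorem freedman_special_form {Ω : Type*} {m0 : MeasurableSpace Ω}
    (P : Measure Ω) [IsProbabilityMeasure P]
    (ℱ : Filtration ℕ m0) (X : ℕ → Ω → ℝ)
    (R : ℝ) (hR : 0 < R)
    (hadapted : ∀ t, StronglyMeasurable[ℱ (t + 1)] (X t))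
    (hmds : ∀ t, P[X t | ℱ t] =ᵐ[P] 0)
    (hbdd : ∀ t, ∀ᵐ ω ∂P, |X t ω| ≤ R)
    (α : ℝ) (hα0 : 0 < α) (hα1 : α ≤ 1 / R)
    (T : ℕ) (δ : ℝ) (hδ0 : 0 < δ) (hδ1 : δ < 1) :
    P {ω | ∑ t ∈ Finset.range T, X t ω
        ≤ α * ∑ t ∈ Finset.range T, (P[fun ω' => (X t ω') ^ 2 | ℱ t]) ω
          + Real.log (1 / δ) / α}
      ≥ ENNReal.ofReal (1 - δ) :=
  freedman_special_form_general P ℱ X R hR hadapted hmds hbdd α hα0 hα1 T δ hδ0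
end
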